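/- Let Σ̂ be an n×n symmetric positive definite matrix partitioned into blocks Σ̂₁₁ (n₁×n₁), Σ̂₁₂ (n₁×n₂), Σ̂₂₁ = Σ̂₁₂ᵀ, Σ̂₂₂ (n₂×n₂), and let H ∈ ℝ^{n×k} be partitioned into H₁ ∈ ℝ^{n₁×k}, H₂ ∈ ℝ^{n₂×k} with H₂H₂ᵀ positive definite. Let D = diag(D₁, 0) with D₁ an n₁×n₁ diagonal matrix, and assume HHᵀ + D is positive definite, Σ̂₂₂ = H₂H₂ᵀ, and Σ̂₁₂ = H₁H₂ᵀ. Set Σ̃₁₁ = Σ̂₁₁ − Σ̂₁₂Σ̂₂₂⁻¹Σ̂₂₁ and H̃₁ = H₁·(Iₖ − H₂ᵀ(H₂H₂ᵀ)⁻¹H₂). Then I(Σ̂ ‖ HHᵀ + D) = I(Σ̃₁₁ ‖ H̃₁H̃₁ᵀ + D₁). -/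

import Mathlib

open Matrix

/-- I-divergence between two positive definite matrices. -/
noncomputable def Idiv {ι : Type} [Fintype ι] [DecidableEq ι]
    (S1 S2 : Matrix ι ι ℝ) : ℝ :=
  (1 / 2) * Real.log (S2.det / S1.det) - (Fintype.card ι : ℝ) / 2
    + (1 / 2) * (S2⁻¹ * S1).trace

lemma trace_fromBlocks' {m n : Type} [Fintype m] [Fintype n]
    (A : Matrix m m ℝ) (B : Matrix m n ℝ) (C : Matrix n m ℝ) (D : Matrix n n ℝ) :
    (fromBlocks A B C D).trace = A.trace + D.trace := by
  simp [Matrix.trace, Fintype.sum_sum_type, Matrix.diag, fromBlocks]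

lemma key {m n : Type} [Fintype m] [Fintype n] [DecidableEq m] [DecidableEq n]
    (A P : Matrix m m ℝ) (B : Matrix m n ℝ) (C : Matrix n n ℝ)
    [hC : Invertible C] [hS : Invertible (P - B * C⁻¹ * Bᵀ)] :
    Idiv (fromBlocks A B Bᵀ C) (fromBlocks P B Bᵀ C)
      = Idiv (A - B * C⁻¹ * Bᵀ) (P - B * C⁻¹ * Bᵀ) := by
  have hinv : ⅟C = C⁻¹ := invOf_eq_nonsing_inv C
  haveI hS' : Invertible (P - B * ⅟C * Bᵀ) := by rw [hinv]; exact hS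
  haveI := fromBlocks₂₂Invertible P B Bᵀ C
  set S := P - B * C⁻¹ * Bᵀ with hSdef
  have hSS : P - B * ⅟C * Bᵀ = S := by rw [hinv]
  have hSinv : ⅟(P - B * ⅟C * Bᵀ) = S⁻¹ := by
    rw [invOf_eq_nonsing_inv, hSS]
  -- determinants
  have hdetP : (fromBlocks P B Bᵀ C).det = C.det * S.det := by
    rw [det_fromBlocks₂₂, hSS]
  have hdetA : (fromBlocks A B Bᵀ C).det = C.det * (A - B * C⁻¹ * Bᵀ).det := by
    rw [det_fromBlocks₂₂, hinv]
  -- inverse of the block matrix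
  have hMinv : (fromBlocks P B Bᵀ C)⁻¹ =
      fromBlocks S⁻¹ (-(S⁻¹ * B * C⁻¹)) (-(C⁻¹ * Bᵀ * S⁻¹))
        (C⁻¹ + C⁻¹ * Bᵀ * S⁻¹ * B * C⁻¹) := by
    rw [← invOf_eq_nonsing_inv, invOf_fromBlocks₂₂_eq, hSinv, hinv]
  -- trace
  have htr : ((fromBlocks P B Bᵀ C)⁻¹ * fromBlocks A B Bᵀ C).trace
      = (S⁻¹ * (A - B * C⁻¹ * Bᵀ)).trace + (Fintype.card n : ℝ) := by
    rw [hMinv, fromBlocks_multiply, trace_fromBlocks']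
    have h1 : S⁻¹ * A + -(S⁻¹ * B * C⁻¹) * Bᵀ = S⁻¹ * (A - B * C⁻¹ * Bᵀ) := by
      simp only [Matrix.mul_sub, Matrix.neg_mul, ← sub_eq_add_neg, Matrix.mul_assoc]
    have h2 : -(C⁻¹ * Bᵀ * S⁻¹) * B + (C⁻¹ + C⁻¹ * Bᵀ * S⁻¹ * B * C⁻¹) * C
        = (1 : Matrix n n ℝ) := by
      have hCC : C⁻¹ * C = 1 := inv_mul_of_invertible C
      simp only [Matrix.add_mul, Matrix.neg_mul, Matrix.mul_assoc, hCC, Matrix.mul_one]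
      rw [add_comm (1 : Matrix n n ℝ)]; exact neg_add_cancel_left _ 1
    rw [h1, h2, trace_one]
  have hCdet : C.det ≠ 0 := (isUnit_det_of_invertible C).ne_zero
  simp only [Idiv, hdetP, hdetA, htr, mul_div_mul_left _ _ hCdet,
    Fintype.card_sum]
  push_cast
  ring

theorem stmt_14 (n1 n2 k : ℕ)
    (Shat : Matrix (Fin n1 ⊕ Fin n2) (Fin n1 ⊕ Fin n2) ℝ) (hShat : Shat.PosDef)
    (H : Matrix (Fin n1 ⊕ Fin n2) (Fin k) ℝ)
    (H1 : Matrix (Fin n1) (Fin k) ℝ) (hH1 : H1 = H.submatrix Sum.inl id)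
    (H2 : Matrix (Fin n2) (Fin k) ℝ) (hH2 : H2 = H.submatrix Sum.inr id)
    (hH2pos : (H2 * H2ᵀ).PosDef)
    (D1 : Matrix (Fin n1) (Fin n1) ℝ) (hD1 : D1.IsDiag)
    (D : Matrix (Fin n1 ⊕ Fin n2) (Fin n1 ⊕ Fin n2) ℝ)
    (hD : D = fromBlocks D1 0 0 0)
    (hHD : (H * Hᵀ + D).PosDef)
    (h22 : Shat.toBlocks₂₂ = H2 * H2ᵀ)
    (h12 : Shat.toBlocks₁₂ = H1 * H2ᵀ)
    (St11 : Matrix (Fin n1) (Fin n1) ℝ)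
    (hSt11 : St11 = Shat.toBlocks₁₁
      - Shat.toBlocks₁₂ * Shat.toBlocks₂₂⁻¹ * Shat.toBlocks₂₁)
    (Ht1 : Matrix (Fin n1) (Fin k) ℝ)
    (hHt1 : Ht1 = H1 * ((1 : Matrix (Fin k) (Fin k) ℝ)
      - H2ᵀ * (H2 * H2ᵀ)⁻¹ * H2)) :
    Idiv Shat (H * Hᵀ + D) = Idiv St11 (Ht1 * Ht1ᵀ + D1) := by
  set C : Matrix (Fin n2) (Fin n2) ℝ := H2 * H2ᵀ with hCdef
  set B : Matrix (Fin n1) (Fin n2) ℝ := H1 * H2ᵀ with hBdef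
  set A : Matrix (Fin n1) (Fin n1) ℝ := Shat.toBlocks₁₁ with hAdef
  set P : Matrix (Fin n1) (Fin n1) ℝ := H1 * H1ᵀ + D1 with hPdef
  haveI hCinv : Invertible C := Matrix.invertibleOfIsUnitDet C hH2pos.det_pos.ne'.isUnit
  -- symmetry of Shat
  have hsym : Shatᵀ = Shat := by
    have h := hShat.isHermitian
    rwa [← Matrix.conjTranspose_eq_transpose_of_trivial]
  have h21 : Shat.toBlocks₂₁ = Bᵀ := by
    ext i j
    have := congrFun (congrFun hsym (Sum.inr i)) (Sum.inl j)
    simp only [Matrix.transpose_apply] at this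
    show Shat (Sum.inr i) (Sum.inl j) = B j i
    rw [← this, ← h12]
    rfl
  -- Shat as a block matrix
  have hShatB : Shat = fromBlocks A B Bᵀ C := by
    rw [← Matrix.fromBlocks_toBlocks Shat, h12, h22, h21]
  -- H as fromRows
  have hHrows : H = fromRows H1 H2 := by
    ext i j
    cases i with
    | inl i => simp [hH1, fromRows_apply_inl]
    | inr i => simp [hH2, fromRows_apply_inr]
  -- the model matrix as a block matrix
  have hM : H * Hᵀ + D = fromBlocks P B Bᵀ C := by
    rw [hHrows, transpose_fromRows, fromRows_mul_fromCols, hD, fromBlocks_add]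
    simp only [add_zero]
    rw [show H2 * H1ᵀ = Bᵀ by rw [hBdef, transpose_mul, transpose_transpose],
      hPdef, hBdef, hCdef]
  -- invertibility of the Schur complement of the model
  haveI hMinv : Invertible (fromBlocks P B Bᵀ C) := by
    rw [← hM]; exact Matrix.invertibleOfIsUnitDet _ hHD.det_pos.ne'.isUnit
  haveI hSinv' : Invertible (P - B * ⅟C * Bᵀ) :=
    Matrix.invertibleOfFromBlocks₂₂Invertible P B Bᵀ C
  haveI hSinv : Invertible (P - B * C⁻¹ * Bᵀ) := by
    rw [← invOf_eq_nonsing_inv]; exact hSinv'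
  -- identify the Schur complements
  have hQt : (H2ᵀ * C⁻¹ * H2)ᵀ = H2ᵀ * C⁻¹ * H2 := by
    have hCt : Cᵀ = C := by rw [hCdef, transpose_mul, transpose_transpose]
    rw [transpose_mul, transpose_mul, transpose_transpose, transpose_nonsing_inv, hCt,
      Matrix.mul_assoc]
  have hQQ : (H2ᵀ * C⁻¹ * H2) * (H2ᵀ * C⁻¹ * H2) = H2ᵀ * C⁻¹ * H2 := by
    have h1 : C * C⁻¹ = 1 := mul_inv_of_invertible C
    calc (H2ᵀ * C⁻¹ * H2) * (H2ᵀ * C⁻¹ * H2)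
        = H2ᵀ * C⁻¹ * ((H2 * H2ᵀ) * (C⁻¹ * H2)) := by
          simp only [Matrix.mul_assoc]
      _ = H2ᵀ * C⁻¹ * H2 := by
          rw [← hCdef, ← Matrix.mul_assoc C, h1, Matrix.one_mul]
  have hSchur : P - B * C⁻¹ * Bᵀ = Ht1 * Ht1ᵀ + D1 := by
    have hHt1T : Ht1ᵀ = ((1 : Matrix (Fin k) (Fin k) ℝ) - H2ᵀ * C⁻¹ * H2) * H1ᵀ := by
      rw [hHt1, transpose_mul, transpose_sub, transpose_one, hQt]
    have hproj : ((1 : Matrix (Fin k) (Fin k) ℝ) - H2ᵀ * C⁻¹ * H2)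
        * ((1 : Matrix (Fin k) (Fin k) ℝ) - H2ᵀ * C⁻¹ * H2)
        = (1 : Matrix (Fin k) (Fin k) ℝ) - H2ᵀ * C⁻¹ * H2 := by
      rw [Matrix.sub_mul, Matrix.mul_sub, Matrix.mul_sub, Matrix.one_mul, Matrix.mul_one,
        hQQ]
      abel_nf
      rw [Matrix.one_mul]
    have : Ht1 * Ht1ᵀ = H1 * H1ᵀ - B * C⁻¹ * Bᵀ := by
      rw [hHt1T, hHt1, Matrix.mul_assoc H1, ← Matrix.mul_assoc ((1 : Matrix (Fin k) (Fin k) ℝ) - H2ᵀ * C⁻¹ * H2), hproj,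
        Matrix.sub_mul, Matrix.one_mul, Matrix.mul_sub, hBdef, transpose_mul,
        transpose_transpose]
      simp only [Matrix.mul_assoc]
    rw [this, hPdef]
    abel
  have hSt : St11 = A - B * C⁻¹ * Bᵀ := by
    rw [hSt11, h12, h22, h21]
  rw [hShatB, hM, key A P B C, hSt, hSchur]
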